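/- arXiv:2407.19908 — 6 statements merged into one kernel-verified Lean document; each statement's English description precedes it below -/
import Mathlib

section
/- Let c be a closed curve and h, k directions. Then the functions t ↦ Θ(c + t·h, k) and t ↦ Θ(c + t·k, h) are differentiable at t = 0, and −(d/dt)|_{t=0} Θ(c + t·h, k) + (d/dt)|_{t=0} Θ(c + t·k, h) = 3 ∫₀^{2π} ⟨c'(θ) × h(θ), k(θ)⟩ dθ. In other words, the exterior derivative of −Θ evaluated on constant directions equals three times the Marsden–Weinstein form Ω^{MW}(c; h, k) = ∫₀^{2π} ⟨c'×h, k⟩ dθ. -/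
noncomputable section

open Real

/-- Points of `ℝ³`. -/
abbrev V3 := Fin 3 → ℝ

/-- Euclidean inner product on `ℝ³`. -/
def dot3 (u v : V3) : ℝ := u 0 * v 0 + u 1 * v 1 + u 2 * v 2

/-- Cross product on `ℝ³`. -/
def cross3 (u v : V3) : V3 :=
  ![u 1 * v 2 - u 2 * v 1, u 2 * v 0 - u 0 * v 2, u 0 * v 1 - u 1 * v 0]

/-- Euclidean norm on `ℝ³`. -/
def norm3 (u : V3) : ℝ := Real.sqrt (dot3 u u)

/-- A closed curve: a smooth `2π`-periodic map `ℝ → ℝ³`. -/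
def IsClosedCurve (c : ℝ → V3) : Prop :=
  ContDiff ℝ (⊤ : ℕ∞) c ∧ ∀ θ, c (θ + 2 * π) = c θ

/-- An immersed closed curve: `c'(θ) ≠ 0` for all `θ`. -/
def IsImmersed (c : ℝ → V3) : Prop :=
  IsClosedCurve c ∧ ∀ θ, deriv c θ ≠ 0

/-- A direction (tangent vector): a smooth `2π`-periodic map `ℝ → ℝ³`. -/
def IsDirection (h : ℝ → V3) : Prop :=
  ContDiff ℝ (⊤ : ℕ∞) h ∧ ∀ θ, h (θ + 2 * π) = h θ

/-- Arc-length derivative along `c`: `D_s h = h'/|c'|`. -/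
def Ds (c h : ℝ → V3) : ℝ → V3 := fun θ => (norm3 (deriv c θ))⁻¹ • deriv h θ

/-- The unit tangent `T = D_s c = c'/|c'|`. -/
def unitT (c : ℝ → V3) : ℝ → V3 := Ds c c

/-- `D_s² c = D_s (D_s c)`. -/
def Ds2c (c : ℝ → V3) : ℝ → V3 := Ds c (Ds c c)

/-- Arc-length integral `∫ f ds = ∫₀^{2π} f(θ) |c'(θ)| dθ`. -/
def arcInt (c : ℝ → V3) (f : ℝ → ℝ) : ℝ :=
  ∫ θ in (0:ℝ)..(2 * π), f θ * norm3 (deriv c θ)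

/-- `L²(ds)` pairing `⟨f,g⟩_{L²} = ∫ ⟨f,g⟩ ds`. -/
def L2 (c f g : ℝ → V3) : ℝ := arcInt c (fun θ => dot3 (f θ) (g θ))

/-- Length `ℓ_c = ∫₀^{2π} |c'(θ)| dθ`. -/
def curveLen (c : ℝ → V3) : ℝ := ∫ θ in (0:ℝ)..(2 * π), norm3 (deriv c θ)

/-- The Liouville one-form for `L = id`: `Θ(c,h) = ∫₀^{2π} ⟨c × c', h⟩ dθ`. -/
def Theta (c h : ℝ → V3) : ℝ :=
  ∫ θ in (0:ℝ)..(2 * π), dot3 (cross3 (c θ) (deriv c θ)) (h θ)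

/-- The squared curvature `κ² = |D_s² c|²`. -/
def kappaSq (c : ℝ → V3) (θ : ℝ) : ℝ := dot3 (Ds2c c θ) (Ds2c c θ)

section Aux

lemma cont_apply3 {f : ℝ → V3} (hf : Continuous f) (i : Fin 3) :
    Continuous fun θ => f θ i := (continuous_apply i).comp hf

lemma cont_dcc {f g e : ℝ → V3} (hf : Continuous f) (hg : Continuous g)
    (he : Continuous e) : Continuous fun θ => dot3 (cross3 (f θ) (g θ)) (e θ) := by
  simp only [dot3, cross3, Matrix.cons_val_zero, Matrix.cons_val_one, Matrix.head_cons,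
    Matrix.cons_val_two, Matrix.tail_cons]
  fun_prop

lemma expand3 (u u' v v' w : V3) (t : ℝ) :
    dot3 (cross3 (u + t • v) (u' + t • v')) w =
      dot3 (cross3 u u') w +
        t * (dot3 (cross3 v u') w + dot3 (cross3 u v') w) +
        t ^ 2 * dot3 (cross3 v v') w := by
  simp [dot3, cross3, Pi.add_apply, Pi.smul_apply, smul_eq_mul]
  ring

lemma hasDerivAt_comp3 {c : ℝ → V3} (hc : ContDiff ℝ (⊤ : ℕ∞) c) (θ : ℝ) (i : Fin 3) :
    HasDerivAt (fun θ => c θ i) (deriv c θ i) θ := by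
  have H : HasDerivAt c (deriv c θ) θ := (hc.differentiable (by simp) θ).hasDerivAt
  exact hasDerivAt_pi.mp H i

/-- Key derivative expansion in `t` of `Θ(c + t h, k)`. -/
lemma theta_deriv (c h k : ℝ → V3) (hc : IsClosedCurve c) (hh : IsDirection h)
    (hk : IsDirection k) :
    HasDerivAt (fun t : ℝ => Theta (fun θ => c θ + t • h θ) k)
      (∫ θ in (0:ℝ)..(2 * π),
        (dot3 (cross3 (h θ) (deriv c θ)) (k θ) + dot3 (cross3 (c θ) (deriv h θ)) (k θ))) 0 := by
  have hcd : Continuous (deriv c) := hc.1.continuous_deriv (by simp)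
  have hhd : Continuous (deriv h) := hh.1.continuous_deriv (by simp)
  set A := ∫ θ in (0:ℝ)..(2 * π), dot3 (cross3 (c θ) (deriv c θ)) (k θ) with hA
  set B := ∫ θ in (0:ℝ)..(2 * π),
      (dot3 (cross3 (h θ) (deriv c θ)) (k θ) + dot3 (cross3 (c θ) (deriv h θ)) (k θ)) with hB
  set C := ∫ θ in (0:ℝ)..(2 * π), dot3 (cross3 (h θ) (deriv h θ)) (k θ) with hC
  have key : ∀ t : ℝ, Theta (fun θ => c θ + t • h θ) k = A + t * B + t ^ 2 * C := by
    intro t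
    have hder : ∀ θ, deriv (fun θ => c θ + t • h θ) θ = deriv c θ + t • deriv h θ := by
      intro θ
      exact (((hc.1.differentiable (by simp) θ).hasDerivAt).add
        (((hh.1.differentiable (by simp) θ).hasDerivAt).const_smul t)).deriv
    have h1 : Theta (fun θ => c θ + t • h θ) k =
        ∫ θ in (0:ℝ)..(2 * π),
          (dot3 (cross3 (c θ) (deriv c θ)) (k θ) +
            t * (dot3 (cross3 (h θ) (deriv c θ)) (k θ) + dot3 (cross3 (c θ) (deriv h θ)) (k θ)) +
            t ^ 2 * dot3 (cross3 (h θ) (deriv h θ)) (k θ)) := by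
      unfold Theta
      refine intervalIntegral.integral_congr fun θ _ => ?_
      rw [hder θ]
      exact expand3 _ _ _ _ _ t
    have i1 : IntervalIntegrable (fun θ => dot3 (cross3 (c θ) (deriv c θ)) (k θ))
        MeasureTheory.volume 0 (2 * π) :=
      (cont_dcc hc.1.continuous hcd hk.1.continuous).intervalIntegrable _ _
    have i2 : IntervalIntegrable (fun θ =>
        t * (dot3 (cross3 (h θ) (deriv c θ)) (k θ) + dot3 (cross3 (c θ) (deriv h θ)) (k θ)))
        MeasureTheory.volume 0 (2 * π) :=
      (continuous_const.mul ((cont_dcc hh.1.continuous hcd hk.1.continuous).add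
        (cont_dcc hc.1.continuous hhd hk.1.continuous))).intervalIntegrable _ _
    have i3 : IntervalIntegrable (fun θ => t ^ 2 * dot3 (cross3 (h θ) (deriv h θ)) (k θ))
        MeasureTheory.volume 0 (2 * π) :=
      (continuous_const.mul
        (cont_dcc hh.1.continuous hhd hk.1.continuous)).intervalIntegrable _ _
    rw [h1, intervalIntegral.integral_add (i1.add i2) i3, intervalIntegral.integral_add i1 i2,
      intervalIntegral.integral_const_mul, intervalIntegral.integral_const_mul]
  have hpoly : HasDerivAt (fun t : ℝ => A + t * B + t ^ 2 * C) B 0 := by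
    have h1 : HasDerivAt (fun t : ℝ => A + t * B + t ^ 2 * C)
        (0 + 1 * B + (2 * (0:ℝ) ^ 1) * C) 0 := by
      exact (((hasDerivAt_const (0:ℝ) A).add ((hasDerivAt_id (0:ℝ)).mul_const B)).add
        ((hasDerivAt_pow 2 (0:ℝ)).mul_const C))
    simpa using h1
  exact hpoly.congr_of_eventuallyEq (Filter.Eventually.of_forall fun t => key t)

end Aux

/-- the exterior derivative of `−Θ` evaluated on constant directions equals
three times the Marsden–Weinstein form. -/
theorem minus_dTheta_eq_three_MW (c h k : ℝ → V3)
    (hc : IsClosedCurve c) (hh : IsDirection h) (hk : IsDirection k) :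
    ∃ a b : ℝ,
      HasDerivAt (fun t : ℝ => Theta (fun θ => c θ + t • h θ) k) a 0 ∧
      HasDerivAt (fun t : ℝ => Theta (fun θ => c θ + t • k θ) h) b 0 ∧
      -a + b = 3 * ∫ θ in (0:ℝ)..(2 * π), dot3 (cross3 (deriv c θ) (h θ)) (k θ) := by
  refine ⟨_, _, theta_deriv c h k hc hh hk, theta_deriv c k h hc hk hh, ?_⟩
  have hcd : Continuous (deriv c) := hc.1.continuous_deriv (by simp)
  have hhd : Continuous (deriv h) := hh.1.continuous_deriv (by simp)
  have hkd : Continuous (deriv k) := hk.1.continuous_deriv (by simp)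
  set f1 : ℝ → ℝ := fun θ =>
    dot3 (cross3 (h θ) (deriv c θ)) (k θ) + dot3 (cross3 (c θ) (deriv h θ)) (k θ) with hf1
  set f2 : ℝ → ℝ := fun θ =>
    dot3 (cross3 (k θ) (deriv c θ)) (h θ) + dot3 (cross3 (c θ) (deriv k θ)) (h θ) with hf2
  set T : ℝ → ℝ := fun θ => dot3 (cross3 (deriv c θ) (h θ)) (k θ) with hT
  set G : ℝ → ℝ := fun θ =>
    dot3 (cross3 (deriv c θ) (h θ)) (k θ) + dot3 (cross3 (c θ) (deriv h θ)) (k θ) +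
      dot3 (cross3 (c θ) (h θ)) (deriv k θ) with hG
  have cf1 : Continuous f1 :=
    (cont_dcc hh.1.continuous hcd hk.1.continuous).add
      (cont_dcc hc.1.continuous hhd hk.1.continuous)
  have cf2 : Continuous f2 :=
    (cont_dcc hk.1.continuous hcd hh.1.continuous).add
      (cont_dcc hc.1.continuous hkd hh.1.continuous)
  have cT : Continuous T := cont_dcc hcd hh.1.continuous hk.1.continuous
  have cG : Continuous G :=
    ((cont_dcc hcd hh.1.continuous hk.1.continuous).add
      (cont_dcc hc.1.continuous hhd hk.1.continuous)).add
      ((cont_dcc hc.1.continuous hh.1.continuous hkd))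
  -- ∫ G = 0 by the fundamental theorem of calculus and periodicity
  have hFder : ∀ θ ∈ Set.uIcc (0:ℝ) (2 * π),
      HasDerivAt (fun θ => dot3 (cross3 (c θ) (h θ)) (k θ)) (G θ) θ := by
    intro θ _
    have Hc := fun i => hasDerivAt_comp3 hc.1 θ i
    have Hh := fun i => hasDerivAt_comp3 hh.1 θ i
    have Hk := fun i => hasDerivAt_comp3 hk.1 θ i
    have T0 := (((((Hc 1).mul (Hh 2)).sub ((Hc 2).mul (Hh 1))).mul (Hk 0)).add
        ((((Hc 2).mul (Hh 0)).sub ((Hc 0).mul (Hh 2))).mul (Hk 1))).add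
        ((((Hc 0).mul (Hh 1)).sub ((Hc 1).mul (Hh 0))).mul (Hk 2))
    have e1 : (fun θ => dot3 (cross3 (c θ) (h θ)) (k θ)) =
        (fun θ => (c θ 1 * h θ 2 - c θ 2 * h θ 1) * k θ 0 +
          (c θ 2 * h θ 0 - c θ 0 * h θ 2) * k θ 1 +
          (c θ 0 * h θ 1 - c θ 1 * h θ 0) * k θ 2) := by
      funext θ; simp [dot3, cross3]
    rw [e1]
    refine T0.congr_deriv ?_
    simp [hG, dot3, cross3]
    ring
  have hGzero : (∫ θ in (0:ℝ)..(2 * π), G θ) = 0 := by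
    rw [intervalIntegral.integral_eq_sub_of_hasDerivAt hFder (cG.intervalIntegrable _ _)]
    have h2 : c (2 * π) = c 0 := by simpa using hc.2 0
    have h3 : h (2 * π) = h 0 := by simpa using hh.2 0
    have h4 : k (2 * π) = k 0 := by simpa using hk.2 0
    rw [h2, h3, h4, sub_self]
  have key : ∀ θ, f2 θ - f1 θ = 3 * T θ - G θ := by
    intro θ; simp only [hf1, hf2, hT, hG, dot3, cross3, Matrix.cons_val_zero,
      Matrix.cons_val_one, Matrix.head_cons, Matrix.cons_val_two, Matrix.tail_cons]
    ring
  calc -(∫ θ in (0:ℝ)..(2 * π), f1 θ) + ∫ θ in (0:ℝ)..(2 * π), f2 θ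
      = ∫ θ in (0:ℝ)..(2 * π), (f2 θ - f1 θ) := by
        rw [intervalIntegral.integral_sub (cf2.intervalIntegrable _ _)
          (cf1.intervalIntegrable _ _)]; ring
    _ = ∫ θ in (0:ℝ)..(2 * π), (3 * T θ - G θ) :=
        intervalIntegral.integral_congr fun θ _ => key θ
    _ = 3 * ∫ θ in (0:ℝ)..(2 * π), T θ := by
        rw [intervalIntegral.integral_sub (f := fun θ => 3 * T θ) ((continuous_const.mul cT).intervalIntegrable _ _)
          (cG.intervalIntegrable _ _), hGzero, intervalIntegral.integral_const_mul, sub_zero]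
end
end

section
/- Let c be an immersed closed curve and h a direction. Then ∫₀^{2π} ⟨c'(θ) × h(θ), k(θ)⟩ dθ = 0 for every direction k if and only if c'(θ) × h(θ) = 0 for all θ, which (since c'(θ) ≠ 0) holds if and only if h = a·c' for some smooth 2π-periodic function a : ℝ → ℝ. In other words, the kernel of the Marsden–Weinstein form at c consists exactly of the vector fields along c that are tangent to c. -/
noncomputable section

open Real

/- ### Auxiliary lemmas -/

lemma dot3_self_nonneg (u : V3) : 0 ≤ dot3 u u := by
  unfold dot3; nlinarith [sq_nonneg (u 0), sq_nonneg (u 1), sq_nonneg (u 2)]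

lemma eq_zero_of_dot3_self {u : V3} (h : dot3 u u = 0) : u = 0 := by
  unfold dot3 at h
  have h0 : u 0 = 0 := by nlinarith [sq_nonneg (u 0), sq_nonneg (u 1), sq_nonneg (u 2)]
  have h1 : u 1 = 0 := by nlinarith [sq_nonneg (u 0), sq_nonneg (u 1), sq_nonneg (u 2)]
  have h2 : u 2 = 0 := by nlinarith [sq_nonneg (u 0), sq_nonneg (u 1), sq_nonneg (u 2)]
  funext i; fin_cases i <;> simpa using ‹_›

lemma contDiff_dot3 {f g : ℝ → V3} (hf : ContDiff ℝ (⊤ : ℕ∞) f) (hg : ContDiff ℝ (⊤ : ℕ∞) g) :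
    ContDiff ℝ (⊤ : ℕ∞) (fun θ => dot3 (f θ) (g θ)) := by
  have F : ∀ i, ContDiff ℝ (⊤ : ℕ∞) (fun θ => f θ i) := fun i => contDiff_pi.mp hf i
  have G : ∀ i, ContDiff ℝ (⊤ : ℕ∞) (fun θ => g θ i) := fun i => contDiff_pi.mp hg i
  unfold dot3
  exact (((F 0).mul (G 0)).add ((F 1).mul (G 1))).add ((F 2).mul (G 2))

lemma contDiff_cross3 {f g : ℝ → V3} (hf : ContDiff ℝ (⊤ : ℕ∞) f) (hg : ContDiff ℝ (⊤ : ℕ∞) g) :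
    ContDiff ℝ (⊤ : ℕ∞) (fun θ => cross3 (f θ) (g θ)) := by
  have F : ∀ i, ContDiff ℝ (⊤ : ℕ∞) (fun θ => f θ i) := fun i => contDiff_pi.mp hf i
  have G : ∀ i, ContDiff ℝ (⊤ : ℕ∞) (fun θ => g θ i) := fun i => contDiff_pi.mp hg i
  rw [contDiff_pi]
  intro i
  fin_cases i
  · show ContDiff ℝ (⊤ : ℕ∞) (fun θ => (cross3 (f θ) (g θ)) 0)
    simp only [cross3, Matrix.cons_val_zero]
    exact ((F 1).mul (G 2)).sub ((F 2).mul (G 1))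
  · show ContDiff ℝ (⊤ : ℕ∞) (fun θ => (cross3 (f θ) (g θ)) 1)
    simp only [cross3, Matrix.cons_val_one, Matrix.head_cons]
    exact ((F 2).mul (G 0)).sub ((F 0).mul (G 2))
  · show ContDiff ℝ (⊤ : ℕ∞) (fun θ => (cross3 (f θ) (g θ)) 2)
    simp only [cross3, Matrix.cons_val_two, Matrix.tail_cons, Matrix.head_cons]
    exact ((F 0).mul (G 1)).sub ((F 1).mul (G 0))

lemma cross3_eq_zero_imp {u v : V3} (hu : u ≠ 0) (h : cross3 u v = 0) :
    v = (dot3 v u / dot3 u u) • u := by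
  have hd : dot3 u u ≠ 0 := fun h0 => hu (eq_zero_of_dot3_self h0)
  have h0 := congrFun h 0
  have h1 := congrFun h 1
  have h2 := congrFun h 2
  simp only [cross3, Matrix.cons_val_zero, Matrix.cons_val_one, Matrix.head_cons,
    Matrix.cons_val_two, Matrix.tail_cons, Pi.zero_apply, sub_eq_zero] at h0 h1 h2
  funext i
  unfold dot3 at hd ⊢
  fin_cases i
  · show v 0 = (v 0 * u 0 + v 1 * u 1 + v 2 * u 2) / (u 0 * u 0 + u 1 * u 1 + u 2 * u 2) * u 0
    rw [div_mul_eq_mul_div, eq_div_iff hd]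
    linear_combination u 2 * h1 - u 1 * h2
  · show v 1 = (v 0 * u 0 + v 1 * u 1 + v 2 * u 2) / (u 0 * u 0 + u 1 * u 1 + u 2 * u 2) * u 1
    rw [div_mul_eq_mul_div, eq_div_iff hd]
    linear_combination u 0 * h2 - u 2 * h0
  · show v 2 = (v 0 * u 0 + v 1 * u 1 + v 2 * u 2) / (u 0 * u 0 + u 1 * u 1 + u 2 * u 2) * u 2
    rw [div_mul_eq_mul_div, eq_div_iff hd]
    linear_combination u 1 * h0 - u 0 * h1

lemma periodic_zero_of_integral_zero {f : ℝ → ℝ} (hf : Continuous f)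
    (hnn : ∀ θ, 0 ≤ f θ) (hp : ∀ θ, f (θ + 2 * π) = f θ)
    (hint : (∫ θ in (0:ℝ)..(2 * π), f θ) = 0) : ∀ θ, f θ = 0 := by
  have h2π : (0:ℝ) < 2 * π := by positivity
  have key : ∀ θ ∈ Set.Ioc (0:ℝ) (2 * π), f θ = 0 := by
    intro θ₂ hθ₂
    by_contra hne
    have hpos : 0 < f θ₂ := (hnn θ₂).lt_of_ne (Ne.symm hne)
    have hev : ∀ᶠ x in nhds θ₂, 0 < f x :=
      (hf.tendsto θ₂).eventually (eventually_gt_nhds hpos)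
    obtain ⟨ε, hε, hball⟩ := Metric.eventually_nhds_iff.mp hev
    set δ : ℝ := min ε θ₂ with hδdef
    have hδ : 0 < δ := lt_min hε hθ₂.1
    have hsub : Set.Ioo (θ₂ - δ) θ₂ ⊆ Function.support f ∩ Set.Ioc 0 (2 * π) := by
      intro x hx
      constructor
      · apply Function.mem_support.mpr
        have : dist x θ₂ < ε := by
          rw [Real.dist_eq, abs_lt]
          constructor <;> [skip; skip] <;>
            · have := hx.1; have := hx.2
              have : δ ≤ ε := min_le_left _ _
              linarith [hx.1, hx.2, min_le_left ε θ₂]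
        exact (hball this).ne'
      · constructor
        · have : δ ≤ θ₂ := min_le_right _ _
          linarith [hx.1]
        · linarith [hx.2, hθ₂.2]
    have hinteg : IntervalIntegrable f MeasureTheory.volume 0 (2 * π) :=
      hf.intervalIntegrable _ _
    have hposint : 0 < ∫ θ in (0:ℝ)..(2 * π), f θ := by
      rw [intervalIntegral.integral_pos_iff_support_of_nonneg_ae
        (Filter.Eventually.of_forall hnn) hinteg]
      refine ⟨h2π, ?_⟩
      calc (0:ENNReal) < MeasureTheory.volume (Set.Ioo (θ₂ - δ) θ₂) := by
            rw [Real.volume_Ioo]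
            simp only [ENNReal.ofReal_pos]
            linarith
        _ ≤ _ := MeasureTheory.measure_mono hsub
    linarith
  intro θ
  have hper : Function.Periodic f (2 * π) := hp
  obtain ⟨y, hy, hxy⟩ := hper.exists_mem_Ico₀ h2π θ
  rw [hxy]
  rcases eq_or_lt_of_le hy.1 with h0 | h0
  · rw [← h0, ← hp 0]
    exact key (0 + 2 * π) ⟨by linarith, by linarith⟩
  · exact key y ⟨h0, hy.2.le⟩

/-- the kernel of the Marsden–Weinstein form at `c` consists exactly of
the vector fields along `c` tangent to `c`. -/
theorem MW_kernel (c h : ℝ → V3) (hc : IsImmersed c) (hh : IsDirection h) :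
    ((∀ k, IsDirection k →
        (∫ θ in (0:ℝ)..(2 * π), dot3 (cross3 (deriv c θ) (h θ)) (k θ)) = 0) ↔
      (∀ θ, cross3 (deriv c θ) (h θ) = 0)) ∧
    ((∀ θ, cross3 (deriv c θ) (h θ) = 0) ↔
      (∃ a : ℝ → ℝ, ContDiff ℝ (⊤ : ℕ∞) a ∧ (∀ θ, a (θ + 2 * π) = a θ) ∧
        ∀ θ, h θ = a θ • deriv c θ)) := by
  obtain ⟨⟨hcs, hcp⟩, hc0⟩ := hc
  obtain ⟨hhs, hhp⟩ := hh
  have hcs' : ContDiff ℝ (((⊤ : ℕ∞) : WithTop ℕ∞) + 1) c := by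
    rw [show (((⊤ : ℕ∞) : WithTop ℕ∞) + 1) = ((⊤ : ℕ∞) : WithTop ℕ∞) from rfl]; exact hcs
  have hcd : ContDiff ℝ (⊤ : ℕ∞) (deriv c) := (contDiff_succ_iff_deriv.mp hcs').2.2
  have hcdp : ∀ θ, deriv c (θ + 2 * π) = deriv c θ := by
    intro θ
    have hfun : (fun t => c (t + 2 * π)) = c := funext hcp
    rw [← deriv_comp_add_const c (2 * π) θ, hfun]
  set g : ℝ → V3 := fun θ => cross3 (deriv c θ) (h θ) with hgdef
  have hgs : ContDiff ℝ (⊤ : ℕ∞) g := contDiff_cross3 hcd hhs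
  have hgp : ∀ θ, g (θ + 2 * π) = g θ := by
    intro θ; simp only [hgdef, hcdp, hhp]
  constructor
  · constructor
    · intro H θ
      have Hg := H g ⟨hgs, hgp⟩
      have hzero := periodic_zero_of_integral_zero
        (f := fun θ => dot3 (g θ) (g θ))
        (contDiff_dot3 hgs hgs).continuous
        (fun θ => dot3_self_nonneg _)
        (fun θ => by simp only [hgp])
        Hg
      exact eq_zero_of_dot3_self (hzero θ)
    · intro H k _
      have : (fun θ => dot3 (cross3 (deriv c θ) (h θ)) (k θ)) = fun _ => (0:ℝ) := by
        funext θ; rw [H θ]; simp [dot3]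
      rw [this]
      simp
  · constructor
    · intro H
      refine ⟨fun θ => dot3 (h θ) (deriv c θ) / dot3 (deriv c θ) (deriv c θ), ?_, ?_, ?_⟩
      · apply ContDiff.div (contDiff_dot3 hhs hcd) (contDiff_dot3 hcd hcd)
        intro θ
        exact fun h0 => hc0 θ (eq_zero_of_dot3_self h0)
      · intro θ; simp only [hhp, hcdp]
      · intro θ
        exact cross3_eq_zero_imp (hc0 θ) (H θ)
    · rintro ⟨a, -, -, ha⟩ θ
      rw [ha θ]
      funext i
      fin_cases i <;>
        simp [cross3, Pi.smul_apply, smul_eq_mul] <;> ring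
end
end

section
/- Let c be a closed curve, h and k directions, and λ a real-valued function on smooth maps ℝ → ℝ³ such that t ↦ λ(c + t·h) is differentiable at 0 with derivative λ'_h and t ↦ λ(c + t·k) is differentiable at 0 with derivative λ'_k. Then the functions t ↦ λ(c+t·h)·Θ(c+t·h, k) and t ↦ λ(c+t·k)·Θ(c+t·k, h) are differentiable at t = 0, and −(d/dt)|_{t=0}[λ(c+t·h)·Θ(c+t·h, k)] + (d/dt)|_{t=0}[λ(c+t·k)·Θ(c+t·k, h)] = 3·λ(c)·∫₀^{2π} ⟨c'×h, k⟩ dθ + Θ(c,h)·λ'_k − Θ(c,k)·λ'_h. That is, the presymplectic form induced by the conformal factor λ satisfies Ω^λ = λ·Ω^{id} + Θ ∧ dλ. -/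
noncomputable section

open Real

/-- Auxiliary: triple product integrand. -/
def tri (a b d : ℝ → V3) (θ : ℝ) : ℝ := dot3 (cross3 (a θ) (b θ)) (d θ)

/-- Auxiliary: first-order coefficient integrand. -/
def p1f (c u g : ℝ → V3) (θ : ℝ) : ℝ := tri c (deriv u) g θ + tri u (deriv c) g θ

lemma tri_cont {a b d : ℝ → V3} (ha : Continuous a) (hb : Continuous b) (hd : Continuous d) :
    Continuous (tri a b d) := by
  unfold tri
  simp only [dot3, cross3, Matrix.cons_val_zero, Matrix.cons_val_one, Matrix.head_cons,
    Matrix.cons_val_two, Matrix.tail_cons]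
  fun_prop

lemma p1f_cont {c u g : ℝ → V3} (hc : Continuous c) (hc' : Continuous (deriv c))
    (hu : Continuous u) (hu' : Continuous (deriv u)) (hg : Continuous g) :
    Continuous (p1f c u g) := (tri_cont hc hu' hg).add (tri_cont hu hc' hg)

lemma expandTheta (c u g : ℝ → V3) (hc : ContDiff ℝ (⊤ : ℕ∞) c) (hu : ContDiff ℝ (⊤ : ℕ∞) u)
    (hg : Continuous g) (t : ℝ) :
    Theta (fun θ => c θ + t • u θ) g
      = Theta c g + t * (∫ θ in (0:ℝ)..(2 * π), p1f c u g θ)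
        + t ^ 2 * (∫ θ in (0:ℝ)..(2 * π), tri u (deriv u) g θ) := by
  have hcc := hc.continuous
  have huc := hu.continuous
  have hc' := hc.continuous_deriv (by simp)
  have hu' := hu.continuous_deriv (by simp)
  have hD : ∀ θ, deriv (fun θ => c θ + t • u θ) θ = deriv c θ + t • deriv u θ := by
    intro θ
    exact (((hc.differentiable (by simp) θ).hasDerivAt).add
      (((hu.differentiable (by simp) θ).hasDerivAt).const_smul t)).deriv
  have hint : (fun θ => dot3 (cross3 ((fun θ => c θ + t • u θ) θ)
        (deriv (fun θ => c θ + t • u θ) θ)) (g θ))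
      = fun θ => tri c (deriv c) g θ + (t * p1f c u g θ + t ^ 2 * tri u (deriv u) g θ) := by
    funext θ
    rw [hD θ]
    simp only [tri, p1f, dot3, cross3, Pi.add_apply, Pi.smul_apply, smul_eq_mul,
      Matrix.cons_val_zero, Matrix.cons_val_one, Matrix.head_cons,
      Matrix.cons_val_two, Matrix.tail_cons]
    ring
  have i1 : IntervalIntegrable (tri c (deriv c) g) MeasureTheory.volume 0 (2 * π) :=
    (tri_cont hcc hc' hg).intervalIntegrable _ _
  have i2 : IntervalIntegrable (fun θ => t * p1f c u g θ) MeasureTheory.volume 0 (2 * π) :=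
    (continuous_const.mul (p1f_cont hcc hc' huc hu' hg)).intervalIntegrable _ _
  have i3 : IntervalIntegrable (fun θ => t ^ 2 * tri u (deriv u) g θ)
      MeasureTheory.volume 0 (2 * π) :=
    (continuous_const.mul (tri_cont huc hu' hg)).intervalIntegrable _ _
  rw [Theta, hint, intervalIntegral.integral_add i1 (i2.add i3),
    intervalIntegral.integral_add i2 i3, intervalIntegral.integral_const_mul,
    intervalIntegral.integral_const_mul]
  simp only [Theta, tri]
  ring

lemma hasDerivAt_Theta_dir (c u g : ℝ → V3) (hc : ContDiff ℝ (⊤ : ℕ∞) c) (hu : ContDiff ℝ (⊤ : ℕ∞) u)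
    (hg : Continuous g) :
    HasDerivAt (fun t : ℝ => Theta (fun θ => c θ + t • u θ) g)
      (∫ θ in (0:ℝ)..(2 * π), p1f c u g θ) 0 := by
  have poly : (fun t : ℝ => Theta (fun θ => c θ + t • u θ) g)
      = fun t : ℝ => Theta c g + t * (∫ θ in (0:ℝ)..(2 * π), p1f c u g θ)
        + t ^ 2 * (∫ θ in (0:ℝ)..(2 * π), tri u (deriv u) g θ) :=
    funext fun t => expandTheta c u g hc hu hg t
  rw [poly]
  set P := ∫ θ in (0:ℝ)..(2 * π), p1f c u g θ
  set Q := ∫ θ in (0:ℝ)..(2 * π), tri u (deriv u) g θ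
  have h1 : HasDerivAt (fun t : ℝ => Theta c g + t * P) P 0 := by
    simpa using ((hasDerivAt_id (0:ℝ)).mul_const P).const_add (Theta c g)
  have h2 : HasDerivAt (fun t : ℝ => t ^ 2 * Q) 0 0 := by
    simpa using (hasDerivAt_pow 2 (0:ℝ)).mul_const Q
  have := h1.add h2
  simp only [add_zero] at this
  exact this

lemma keyIdentity (c h k : ℝ → V3)
    (hcd : ContDiff ℝ (⊤ : ℕ∞) c) (hcp : ∀ θ, c (θ + 2 * π) = c θ)
    (hhd : ContDiff ℝ (⊤ : ℕ∞) h) (hhp : ∀ θ, h (θ + 2 * π) = h θ)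
    (hkd : ContDiff ℝ (⊤ : ℕ∞) k) (hkp : ∀ θ, k (θ + 2 * π) = k θ) :
    (∫ θ in (0:ℝ)..(2 * π), p1f c k h θ) - (∫ θ in (0:ℝ)..(2 * π), p1f c h k θ)
      = 3 * ∫ θ in (0:ℝ)..(2 * π), tri (deriv c) h k θ := by
  have hcc := hcd.continuous
  have hhc := hhd.continuous
  have hkc := hkd.continuous
  have hc' := hcd.continuous_deriv (by simp)
  have hh' := hhd.continuous_deriv (by simp)
  have hk' := hkd.continuous_deriv (by simp)
  have hFd : ∀ θ ∈ Set.uIcc (0:ℝ) (2 * π),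
      HasDerivAt (fun θ => dot3 (c θ) (cross3 (h θ) (k θ)))
        (-(p1f c k h θ) + (p1f c h k θ + 3 * tri (deriv c) h k θ)) θ := by
    intro θ _
    have hci := fun i => hasDerivAt_pi.mp (hcd.differentiable (by simp) θ).hasDerivAt i
    have hhi := fun i => hasDerivAt_pi.mp (hhd.differentiable (by simp) θ).hasDerivAt i
    have hki := fun i => hasDerivAt_pi.mp (hkd.differentiable (by simp) θ).hasDerivAt i
    have e : (fun θ => dot3 (c θ) (cross3 (h θ) (k θ))) = fun θ =>
        c θ 0 * (h θ 1 * k θ 2 - h θ 2 * k θ 1) + c θ 1 * (h θ 2 * k θ 0 - h θ 0 * k θ 2)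
          + c θ 2 * (h θ 0 * k θ 1 - h θ 1 * k θ 0) := by
      funext x
      simp only [dot3, cross3, Matrix.cons_val_zero, Matrix.cons_val_one, Matrix.head_cons,
        Matrix.cons_val_two, Matrix.tail_cons]
    rw [e]
    have H := (((hci 0).mul (((hhi 1).mul (hki 2)).sub ((hhi 2).mul (hki 1)))).add
      ((hci 1).mul (((hhi 2).mul (hki 0)).sub ((hhi 0).mul (hki 2))))).add
      ((hci 2).mul (((hhi 0).mul (hki 1)).sub ((hhi 1).mul (hki 0))))
    refine H.congr_deriv ?_
    simp only [Pi.mul_apply, Pi.sub_apply]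
    simp only [p1f, tri, dot3, cross3, Matrix.cons_val_zero, Matrix.cons_val_one,
      Matrix.head_cons, Matrix.cons_val_two, Matrix.tail_cons]
    ring
  have iA : IntervalIntegrable (fun θ => -(p1f c k h θ)) MeasureTheory.volume 0 (2 * π) :=
    ((p1f_cont hcc hc' hkc hk' hhc).neg).intervalIntegrable _ _
  have iB : IntervalIntegrable (p1f c h k) MeasureTheory.volume 0 (2 * π) :=
    (p1f_cont hcc hc' hhc hh' hkc).intervalIntegrable _ _
  have iC : IntervalIntegrable (fun θ => 3 * tri (deriv c) h k θ) MeasureTheory.volume 0 (2 * π) :=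
    (continuous_const.mul (tri_cont hc' hhc hkc)).intervalIntegrable _ _
  have h0 : ∫ θ in (0:ℝ)..(2 * π),
      (-(p1f c k h θ) + (p1f c h k θ + 3 * tri (deriv c) h k θ)) = 0 := by
    rw [intervalIntegral.integral_eq_sub_of_hasDerivAt hFd ((iA.add (iB.add iC)))]
    rw [show (2 * π : ℝ) = 0 + 2 * π by ring, hcp, hhp, hkp]
    ring
  rw [intervalIntegral.integral_add iA (iB.add iC), intervalIntegral.integral_add iB iC,
    intervalIntegral.integral_neg, intervalIntegral.integral_const_mul] at h0
  linarith

/-- the presymplectic form of the conformal factor `λ` satisfies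
`Ω^λ = λ·Ω^{id} + Θ ∧ dλ` (evaluated on constant directions). -/
theorem conformal_presymplectic_formula (c h k : ℝ → V3) (lam : (ℝ → V3) → ℝ) (lh lk : ℝ)
    (hc : IsClosedCurve c) (hh : IsDirection h) (hk : IsDirection k)
    (hlh : HasDerivAt (fun t : ℝ => lam (fun θ => c θ + t • h θ)) lh 0)
    (hlk : HasDerivAt (fun t : ℝ => lam (fun θ => c θ + t • k θ)) lk 0) :
    ∃ a b : ℝ,
      HasDerivAt
        (fun t : ℝ => lam (fun θ => c θ + t • h θ) * Theta (fun θ => c θ + t • h θ) k) a 0 ∧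
      HasDerivAt
        (fun t : ℝ => lam (fun θ => c θ + t • k θ) * Theta (fun θ => c θ + t • k θ) h) b 0 ∧
      -a + b = 3 * lam c * (∫ θ in (0:ℝ)..(2 * π), dot3 (cross3 (deriv c θ) (h θ)) (k θ))
        + Theta c h * lk - Theta c k * lh := by
  have e0h : (fun θ => c θ + (0:ℝ) • h θ) = c := by funext θ; simp
  have e0k : (fun θ => c θ + (0:ℝ) • k θ) = c := by funext θ; simp
  have hTh := hasDerivAt_Theta_dir c h k hc.1 hh.1 hk.1.continuous
  have hTk := hasDerivAt_Theta_dir c k h hc.1 hk.1 hh.1.continuous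
  have ha : HasDerivAt
      (fun t : ℝ => lam (fun θ => c θ + t • h θ) * Theta (fun θ => c θ + t • h θ) k)
      (lh * Theta c k + lam c * ∫ θ in (0:ℝ)..(2 * π), p1f c h k θ) 0 := by
    have := hlh.mul hTh
    simp [e0h] at this
    exact this
  have hb : HasDerivAt
      (fun t : ℝ => lam (fun θ => c θ + t • k θ) * Theta (fun θ => c θ + t • k θ) h)
      (lk * Theta c h + lam c * ∫ θ in (0:ℝ)..(2 * π), p1f c k h θ) 0 := by
    have := hlk.mul hTk
    simp [e0k] at this
    exact this
  refine ⟨_, _, ha, hb, ?_⟩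
  have key := keyIdentity c h k hc.1 hc.2 hh.1 hh.2 hk.1 hk.2
  have hQ : (∫ θ in (0:ℝ)..(2 * π), tri (deriv c) h k θ)
      = ∫ θ in (0:ℝ)..(2 * π), dot3 (cross3 (deriv c θ) (h θ)) (k θ) := rfl
  rw [hQ] at key
  linear_combination (lam c) * key
end
end

section
/- Let c be an immersed closed curve, λ₀ > 0 a real number, and A a direction with ⟨A(θ), c'(θ)⟩ = 0 for all θ. Then for every direction k: Ω^λ(c, k) = −(3λ₀ + ⟨A, c⟩_{L²})·Θ(c,k). In particular, in the scale-invariant case 3λ₀ + ⟨A, c⟩_{L²} = 0, the scaling direction I_c = c lies in the kernel of Ω^λ at c. -/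
noncomputable section

open Real

/-- The conformal presymplectic form at `c`, where `lam0` is the value of the conformal
factor `λ` at `c` and `A` is its `L²(ds)`-gradient at `c`:
`Ω^λ(h,k) = 3λ₀ ∫₀^{2π} ⟨c'×h, k⟩ dθ + Θ(c,h)·⟨A,k⟩_{L²} − Θ(c,k)·⟨A,h⟩_{L²}`. -/
def OmegaConf (c : ℝ → V3) (lam0 : ℝ) (A : ℝ → V3) (h k : ℝ → V3) : ℝ :=
  3 * lam0 * (∫ θ in (0:ℝ)..(2 * π), dot3 (cross3 (deriv c θ) (h θ)) (k θ))
    + Theta c h * L2 c A k - Theta c k * L2 c A h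

/-- `Ω^λ(c, k) = −(3λ₀ + ⟨A, c⟩_{L²})·Θ(c,k)`; in particular in the
scale-invariant case the scaling direction `I_c = c` is in the kernel of `Ω^λ`. -/
theorem conformal_scaling_direction (c : ℝ → V3) (lam0 : ℝ) (A : ℝ → V3)
    (hc : IsImmersed c) (hlam0 : 0 < lam0) (hA : IsDirection A)
    (hAt : ∀ θ, dot3 (A θ) (deriv c θ) = 0) :
    (∀ k, IsDirection k →
      OmegaConf c lam0 A c k = -(3 * lam0 + L2 c A c) * Theta c k) ∧
    (3 * lam0 + L2 c A c = 0 →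
      ∀ k, IsDirection k → OmegaConf c lam0 A c k = 0) := by
  have key : ∀ k, IsDirection k →
      OmegaConf c lam0 A c k = -(3 * lam0 + L2 c A c) * Theta c k := by
    intro k hk
    have h1 : (∫ θ in (0:ℝ)..(2 * π), dot3 (cross3 (deriv c θ) (c θ)) (k θ))
        = - Theta c k := by
      rw [Theta, ← intervalIntegral.integral_neg]
      apply intervalIntegral.integral_congr
      intro θ _
      simp [dot3, cross3]; ring
    have h2 : Theta c c = 0 := by
      rw [Theta]
      have : ∀ θ ∈ Set.uIcc (0:ℝ) (2*π),
          dot3 (cross3 (c θ) (deriv c θ)) (c θ) = 0 := by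
        intro θ _; simp [dot3, cross3]; ring
      rw [intervalIntegral.integral_congr this]; simp
    rw [OmegaConf, h1, h2]; ring
  exact ⟨key, fun hz k hk => by rw [key k hk, hz]; ring⟩
end
end

section
/- Let c be an immersed closed curve, λ₀ > 0 a real number, and A a direction with ⟨A(θ), c'(θ)⟩ = 0 for all θ, and assume the scale-invariance condition 3λ₀ + ⟨A, c⟩_{L²} = 0. Set X := −(1/3)·(T × A), where T = c'/|c'|. Then Θ(c, X) = −λ₀ and Ω^λ(X, k) = 0 for every direction k; i.e. the horizontal Ω^{id}-gradient of the conformal factor lies in the kernel of Ω^λ at c. -/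
noncomputable section

open Real

lemma norm3_sq (u : V3) : norm3 u * norm3 u = dot3 u u := by
  have h : 0 ≤ dot3 u u := by
    simp only [dot3]
    nlinarith [mul_self_nonneg (u 0), mul_self_nonneg (u 1), mul_self_nonneg (u 2)]
  simpa [norm3] using Real.mul_self_sqrt h

lemma norm3_ne (u : V3) (hu : u ≠ 0) : norm3 u ≠ 0 := by
  have h : 0 ≤ dot3 u u := by
    simp only [dot3]
    nlinarith [mul_self_nonneg (u 0), mul_self_nonneg (u 1), mul_self_nonneg (u 2)]
  have hne : dot3 u u ≠ 0 := by
    intro h0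
    apply hu
    have h0' : u 0 * u 0 + u 1 * u 1 + u 2 * u 2 = 0 := by simpa [dot3] using h0
    funext j
    fin_cases j
    · show u 0 = 0
      exact mul_self_eq_zero.mp (by nlinarith [mul_self_nonneg (u 1), mul_self_nonneg (u 2)])
    · show u 1 = 0
      exact mul_self_eq_zero.mp (by nlinarith [mul_self_nonneg (u 0), mul_self_nonneg (u 2)])
    · show u 2 = 0
      exact mul_self_eq_zero.mp (by nlinarith [mul_self_nonneg (u 0), mul_self_nonneg (u 1)])
  exact ne_of_gt (Real.sqrt_pos.mpr (lt_of_le_of_ne h (Ne.symm hne)))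

lemma extract1 (r s : ℝ) (x u a : V3) :
    dot3 x (r • cross3 (s • u) a) = r * s * dot3 x (cross3 u a) := by
  simp only [dot3, cross3, Pi.smul_apply, smul_eq_mul, Matrix.cons_val_zero,
    Matrix.cons_val_one, Matrix.head_cons, Matrix.cons_val_two, Matrix.tail_cons]
  ring

lemma extract2 (r s : ℝ) (u a k : V3) :
    dot3 (cross3 u (r • cross3 (s • u) a)) k = r * s * dot3 (cross3 u (cross3 u a)) k := by
  simp only [dot3, cross3, Pi.smul_apply, smul_eq_mul, Matrix.cons_val_zero,
    Matrix.cons_val_one, Matrix.head_cons, Matrix.cons_val_two, Matrix.tail_cons]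
  ring

lemma crossDotCross3 (p u a : V3) :
    dot3 (cross3 p u) (cross3 u a) = dot3 p u * dot3 a u - dot3 a p * dot3 u u := by
  simp only [dot3, cross3, Matrix.cons_val_zero, Matrix.cons_val_one, Matrix.head_cons,
    Matrix.cons_val_two, Matrix.tail_cons]
  ring

lemma tripleDot3 (u a k : V3) :
    dot3 (cross3 u (cross3 u a)) k = dot3 a u * dot3 u k - dot3 u u * dot3 a k := by
  simp only [dot3, cross3, Matrix.cons_val_zero, Matrix.cons_val_one, Matrix.head_cons,
    Matrix.cons_val_two, Matrix.tail_cons]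
  ring

lemma pt1 (p u a : V3) (hu : u ≠ 0) (hperp : dot3 a u = 0) :
    dot3 (cross3 p u) ((-(1/3 : ℝ)) • cross3 ((norm3 u)⁻¹ • u) a)
      = 1/3 * (dot3 a p * norm3 u) := by
  have hn := norm3_ne u hu
  rw [extract1, crossDotCross3, hperp, ← norm3_sq u]
  field_simp
  ring

lemma pt2 (u a : V3) (n : ℝ) :
    dot3 a ((-(1/3 : ℝ)) • cross3 (n⁻¹ • u) a) = 0 := by
  rw [extract1]
  simp only [dot3, cross3, Matrix.cons_val_zero, Matrix.cons_val_one, Matrix.head_cons,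
    Matrix.cons_val_two, Matrix.tail_cons]
  ring

lemma pt3 (u a k : V3) (hu : u ≠ 0) (hperp : dot3 a u = 0) :
    dot3 (cross3 u ((-(1/3 : ℝ)) • cross3 ((norm3 u)⁻¹ • u) a)) k
      = 1/3 * (dot3 a k * norm3 u) := by
  have hn := norm3_ne u hu
  rw [extract2, tripleDot3, hperp, ← norm3_sq u]
  field_simp
  ring

/-- in the scale-invariant case, `X = −(1/3)·(T × A)` satisfies
`Θ(c,X) = −λ₀` and lies in the kernel of `Ω^λ` at `c`. -/
theorem conformal_horizontal_gradient_in_kernel (c : ℝ → V3) (lam0 : ℝ) (A : ℝ → V3)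
    (hc : IsImmersed c) (hlam0 : 0 < lam0) (hA : IsDirection A)
    (hAt : ∀ θ, dot3 (A θ) (deriv c θ) = 0)
    (hscale : 3 * lam0 + L2 c A c = 0) :
    Theta c (fun θ => (-(1/3 : ℝ)) • cross3 (unitT c θ) (A θ)) = -lam0 ∧
    ∀ k, IsDirection k →
      OmegaConf c lam0 A (fun θ => (-(1/3 : ℝ)) • cross3 (unitT c θ) (A θ)) k = 0 := by
  set X : ℝ → V3 := fun θ => (-(1/3 : ℝ)) • cross3 (unitT c θ) (A θ) with hXdef
  have hder : ∀ θ, deriv c θ ≠ 0 := hc.2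
  have hTheta : Theta c X = -lam0 := by
    have h1 : Theta c X = 1/3 * L2 c A c := by
      unfold Theta L2 arcInt
      rw [← intervalIntegral.integral_const_mul]
      congr 1
      funext θ
      simpa only [hXdef, unitT, Ds] using pt1 (c θ) (deriv c θ) (A θ) (hder θ) (hAt θ)
    rw [h1]
    linarith
  refine ⟨hTheta, fun k hk => ?_⟩
  have h2 : (∫ θ in (0:ℝ)..(2 * π), dot3 (cross3 (deriv c θ) (X θ)) (k θ))
      = 1/3 * L2 c A k := by
    unfold L2 arcInt
    rw [← intervalIntegral.integral_const_mul]
    congr 1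
    funext θ
    simpa only [hXdef, unitT, Ds] using pt3 (deriv c θ) (A θ) (k θ) (hder θ) (hAt θ)
  have h3 : L2 c A X = 0 := by
    unfold L2 arcInt
    have : ∀ θ : ℝ, dot3 (A θ) (X θ) * norm3 (deriv c θ) = 0 := by
      intro θ
      simp only [hXdef, unitT, Ds, pt2 (deriv c θ) (A θ) (norm3 (deriv c θ)), zero_mul]
    simp only [this, intervalIntegral.integral_zero]
  unfold OmegaConf
  rw [h2, h3, hTheta]
  ring
end
end

section
/- Let c be an immersed closed curve and v ∈ ℝ³. Then ∫⟨D_s²c, D_s c × (D_s c × v)⟩ ds = 0 and ∫⟨D_s²c, D_s c × (D_s c × (v × c))⟩ ds = 0. (These are the two integrals appearing in the computation of the Hamiltonian vector fields of the fluxes of a constant vector field and of a rotational vector field through a Seifert surface of c.) -/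
noncomputable section

open Real

section Helpers

lemma hasDerivAt_proj3 {f : ℝ → V3} {f' : V3} {θ : ℝ}
    (h : HasDerivAt f f' θ) (i : Fin 3) :
    HasDerivAt (fun t => f t i) (f' i) θ := (hasDerivAt_pi.mp h) i

lemma hasDerivAt_dot3 {f g : ℝ → V3} {f' g' : V3} {θ : ℝ}
    (hf : HasDerivAt f f' θ) (hg : HasDerivAt g g' θ) :
    HasDerivAt (fun t => dot3 (f t) (g t))
      (dot3 f' (g θ) + dot3 (f θ) g') θ := by
  have H := (((hasDerivAt_proj3 hf 0).mul (hasDerivAt_proj3 hg 0)).add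
      ((hasDerivAt_proj3 hf 1).mul (hasDerivAt_proj3 hg 1))).add
      ((hasDerivAt_proj3 hf 2).mul (hasDerivAt_proj3 hg 2))
  simp only [dot3]
  refine H.congr_deriv ?_
  ring

lemma hasDerivAt_cross3_const (v : V3) {f : ℝ → V3} {f' : V3} {θ : ℝ}
    (hf : HasDerivAt f f' θ) :
    HasDerivAt (fun t => cross3 v (f t)) (cross3 v f') θ := by
  rw [hasDerivAt_pi]
  intro i
  fin_cases i <;>
    simp only [cross3, Matrix.cons_val_zero, Matrix.cons_val_one, Matrix.head_cons,
      Fin.mk_one, Fin.mk_zero, Matrix.cons_val_two, Matrix.tail_cons] <;>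
    exact ((hasDerivAt_proj3 hf _).const_mul _).sub ((hasDerivAt_proj3 hf _).const_mul _)

lemma continuous_dot3' {f g : ℝ → V3} (hf : Continuous f) (hg : Continuous g) :
    Continuous fun θ => dot3 (f θ) (g θ) := by
  simp only [dot3]
  exact ((((continuous_apply (0:Fin 3)).comp hf).mul ((continuous_apply (0:Fin 3)).comp hg)).add
    (((continuous_apply (1:Fin 3)).comp hf).mul ((continuous_apply (1:Fin 3)).comp hg))).add
    (((continuous_apply (2:Fin 3)).comp hf).mul ((continuous_apply (2:Fin 3)).comp hg))

lemma continuous_cross3_const (v : V3) {f : ℝ → V3} (hf : Continuous f) :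
    Continuous fun θ => cross3 v (f θ) := by
  apply continuous_pi; intro i
  fin_cases i <;>
    simp only [cross3, Matrix.cons_val_zero, Matrix.cons_val_one, Matrix.head_cons,
      Fin.mk_one, Fin.mk_zero, Matrix.cons_val_two, Matrix.tail_cons] <;>
    exact (continuous_const.mul ((continuous_apply _).comp hf)).sub
      (continuous_const.mul ((continuous_apply _).comp hf))
end Helpers

/-- `∫⟨D_s²c, D_s c × (D_s c × v)⟩ ds = 0` and
`∫⟨D_s²c, D_s c × (D_s c × (v × c))⟩ ds = 0` for any constant vector `v`. -/
theorem flux_integrals_vanish (c : ℝ → V3) (hc : IsImmersed c) (v : V3) :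
    arcInt c (fun θ => dot3 (Ds2c c θ)
        (cross3 (unitT c θ) (cross3 (unitT c θ) v))) = 0 ∧
    arcInt c (fun θ => dot3 (Ds2c c θ)
        (cross3 (unitT c θ) (cross3 (unitT c θ) (cross3 v (c θ))))) = 0 := by
  obtain ⟨⟨hsmooth, hper⟩, himm⟩ := hc
  have hsm : ContDiff ℝ (⊤:ℕ∞) c := hsmooth.of_le (by simp)
  have hcd := contDiff_infty_iff_deriv.mp hsm
  have hder : Differentiable ℝ c := hcd.1
  have hc' : ContDiff ℝ (⊤:ℕ∞) (deriv c) := hcd.2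
  have hqpos : ∀ θ, 0 < dot3 (deriv c θ) (deriv c θ) := by
    intro θ
    have h := himm θ
    have hcomp : ∃ i, deriv c θ i ≠ 0 := by
      by_contra hcon
      push_neg at hcon
      exact h (funext fun i => hcon i)
    obtain ⟨i, hi⟩ := hcomp
    have hip : 0 < deriv c θ i * deriv c θ i := mul_self_pos.mpr hi
    simp only [dot3]
    fin_cases i
    · replace hip : 0 < deriv c θ 0 * deriv c θ 0 := hip
      nlinarith [mul_self_nonneg (deriv c θ 1), mul_self_nonneg (deriv c θ 2)]
    · replace hip : 0 < deriv c θ 1 * deriv c θ 1 := hip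
      nlinarith [mul_self_nonneg (deriv c θ 0), mul_self_nonneg (deriv c θ 2)]
    · replace hip : 0 < deriv c θ 2 * deriv c θ 2 := hip
      nlinarith [mul_self_nonneg (deriv c θ 0), mul_self_nonneg (deriv c θ 1)]
  have hnpos : ∀ θ, 0 < norm3 (deriv c θ) := fun θ => Real.sqrt_pos.mpr (hqpos θ)
  have hn : ∀ θ, norm3 (deriv c θ) ≠ 0 := fun θ => (hnpos θ).ne'
  have hnn : ∀ θ, norm3 (deriv c θ) * norm3 (deriv c θ) = dot3 (deriv c θ) (deriv c θ) :=
    fun θ => Real.mul_self_sqrt (hqpos θ).le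
  have hTT : ∀ θ, dot3 (unitT c θ) (unitT c θ) = 1 := by
    intro θ
    have h1 := hnn θ
    simp only [dot3] at h1
    simp only [unitT, Ds, dot3, Pi.smul_apply, smul_eq_mul]
    field_simp [hn θ]
    linear_combination -h1
  -- smoothness of the unit tangent
  have hTsm : ContDiff ℝ (⊤:ℕ∞) (unitT c) := by
    rw [contDiff_iff_contDiffAt]
    intro θ
    have hcomp : ∀ i : Fin 3, ContDiff ℝ (⊤:ℕ∞) (fun t => deriv c t i) := fun i =>
      (ContinuousLinearMap.proj i : (Fin 3 → ℝ) →L[ℝ] ℝ).contDiff.comp hc'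
    have hq : ContDiffAt ℝ (⊤:ℕ∞) (fun t => dot3 (deriv c t) (deriv c t)) θ := by
      simp only [dot3]
      exact ((((hcomp 0).mul (hcomp 0)).add ((hcomp 1).mul (hcomp 1))).add
        ((hcomp 2).mul (hcomp 2))).contDiffAt
    have hsq : ContDiffAt ℝ (⊤:ℕ∞) (fun t => norm3 (deriv c t)) θ := by
      simp only [norm3]
      exact (Real.contDiffAt_sqrt (hqpos θ).ne').comp θ hq
    simp only [unitT, Ds]
    exact (hsq.inv (hn θ)).smul hc'.contDiffAt
  have hTdiff : Differentiable ℝ (unitT c) := hTsm.differentiable (by simp)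
  have hT : ∀ θ, HasDerivAt (unitT c) (deriv (unitT c) θ) θ := fun θ =>
    (hTdiff θ).hasDerivAt
  have hT'cont : Continuous (deriv (unitT c)) := hTsm.continuous_deriv (by exact_mod_cast (le_top : (1:ℕ∞) ≤ ⊤))
  have hcontc : Continuous c := hder.continuous
  -- orthogonality T' ⟂ T
  have horth : ∀ θ, dot3 (deriv (unitT c) θ) (unitT c θ) = 0 := by
    intro θ
    have h1 : HasDerivAt (fun t => dot3 (unitT c t) (unitT c t))
        (dot3 (deriv (unitT c) θ) (unitT c θ) + dot3 (unitT c θ) (deriv (unitT c) θ)) θ :=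
      hasDerivAt_dot3 (hT θ) (hT θ)
    have heq : (fun t => dot3 (unitT c t) (unitT c t)) = fun _ => (1:ℝ) := funext hTT
    rw [heq] at h1
    have h0 := h1.unique (hasDerivAt_const θ (1:ℝ))
    have hsym : dot3 (unitT c θ) (deriv (unitT c) θ) = dot3 (deriv (unitT c) θ) (unitT c θ) := by
      simp only [dot3]; ring
    rw [hsym] at h0
    linarith
  -- pointwise simplification of the integrand
  have hptw : ∀ (w : V3) (θ : ℝ),
      dot3 (Ds2c c θ) (cross3 (unitT c θ) (cross3 (unitT c θ) w)) * norm3 (deriv c θ)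
        = -(dot3 (deriv (unitT c) θ) w) := by
    intro w θ
    have hDs2 : Ds2c c θ = (norm3 (deriv c θ))⁻¹ • deriv (unitT c) θ := rfl
    have hsmul : ∀ (r : ℝ) (a b : V3), dot3 (r • a) b = r * dot3 a b := by
      intro r a b; simp only [dot3, Pi.smul_apply, smul_eq_mul]; ring
    have hid : ∀ a b u : V3, dot3 a (cross3 b (cross3 b u))
        = dot3 b u * dot3 a b - dot3 b b * dot3 a u := by
      intro a b u
      simp only [dot3, cross3, Matrix.cons_val_zero, Matrix.cons_val_one, Matrix.head_cons,
        Matrix.cons_val_two, Matrix.tail_cons]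
      ring
    rw [hDs2, hsmul, hid, hTT θ, horth θ]
    field_simp [hn θ]
    ring
  -- the FTC helper
  have FTC : ∀ (g G : ℝ → ℝ), (∀ θ, HasDerivAt G (g θ) θ) → Continuous g →
      G (2*π) = G 0 → (∫ θ in (0:ℝ)..(2*π), g θ) = 0 := by
    intro g G hG hg hperG
    rw [intervalIntegral.integral_eq_sub_of_hasDerivAt (fun x _ => hG x)
      (hg.intervalIntegrable _ _), hperG, sub_self]
  -- periodicity facts
  have hc'per : deriv c (2*π) = deriv c 0 := by
    have h := deriv_comp_add_const c (2*π) 0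
    have heq : (fun x => c (x + 2*π)) = c := funext hper
    rw [heq] at h
    simpa using h.symm
  have hTper : unitT c (2*π) = unitT c 0 := by
    simp only [unitT, Ds, hc'per]
  constructor
  · have hG : ∀ θ, HasDerivAt (fun t => -(dot3 (unitT c t) v))
        (-(dot3 (deriv (unitT c) θ) v)) θ := by
      intro θ
      have hv : HasDerivAt (fun _ : ℝ => v) 0 θ := hasDerivAt_const θ v
      have h := (hasDerivAt_dot3 (hT θ) hv).neg
      refine h.congr_deriv ?_
      simp [dot3]
    have hcont : Continuous fun θ => -(dot3 (deriv (unitT c) θ) v) :=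
      (continuous_dot3' hT'cont continuous_const).neg
    have heq : arcInt c (fun θ => dot3 (Ds2c c θ)
        (cross3 (unitT c θ) (cross3 (unitT c θ) v)))
        = ∫ θ in (0:ℝ)..(2*π), -(dot3 (deriv (unitT c) θ) v) := by
      simp only [arcInt]
      congr 1
      funext θ
      exact hptw v θ
    rw [heq]
    exact FTC _ _ hG hcont (by rw [hTper])
  · have hw : ∀ θ, HasDerivAt (fun t => cross3 v (c t)) (cross3 v (deriv c θ)) θ :=
      fun θ => hasDerivAt_cross3_const v (hder θ).hasDerivAt
    have hzero : ∀ θ, dot3 (unitT c θ) (cross3 v (deriv c θ)) = 0 := by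
      intro θ
      simp only [unitT, Ds, dot3, cross3, Pi.smul_apply, smul_eq_mul, Matrix.cons_val_zero,
        Matrix.cons_val_one, Matrix.head_cons, Matrix.cons_val_two, Matrix.tail_cons]
      ring
    have hG : ∀ θ, HasDerivAt (fun t => -(dot3 (unitT c t) (cross3 v (c t))))
        (-(dot3 (deriv (unitT c) θ) (cross3 v (c θ)))) θ := by
      intro θ
      have h := (hasDerivAt_dot3 (hT θ) (hw θ)).neg
      rw [hzero θ, add_zero] at h
      exact h
    have hcont : Continuous fun θ => -(dot3 (deriv (unitT c) θ) (cross3 v (c θ))) :=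
      (continuous_dot3' hT'cont (continuous_cross3_const v hcontc)).neg
    have hper2 : -(dot3 (unitT c (2*π)) (cross3 v (c (2*π))))
        = -(dot3 (unitT c 0) (cross3 v (c 0))) := by
      have hc2 : c (2*π) = c 0 := by simpa using hper 0
      rw [hTper, hc2]
    have heq : arcInt c (fun θ => dot3 (Ds2c c θ)
        (cross3 (unitT c θ) (cross3 (unitT c θ) (cross3 v (c θ)))))
        = ∫ θ in (0:ℝ)..(2*π), -(dot3 (deriv (unitT c) θ) (cross3 v (c θ))) := by
      simp only [arcInt]
      congr 1
      funext θ
      exact hptw (cross3 v (c θ)) θ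
    rw [heq]
    exact FTC _ _ hG hcont hper2
end
end
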